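/- arXiv:1801.08565 — 2 statements merged into one kernel-verified Lean document; each statement's English description precedes it below -/
import Mathlib

section
/- For every n ≥ 8 there exists a sequence of n distinct real numbers in which every subsequence that is a rollercoaster has length at most ⌈n/2⌉ (so the bound ⌈n/2⌉ on the length of a longest rollercoaster is tight in the worst case). -/
/-- `IsRun t i j` says that the contiguous block `t i, t (i+1), …, t j` is a
*run* of the finite sequence `t`: it is strictly increasing or strictly
decreasing, and it is maximal with this property among contiguous blocks. -/
def IsRun {m : ℕ} (t : Fin m → ℝ) (i j : Fin m) : Prop :=
  i ≤ j ∧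
  (StrictMonoOn t (Set.Icc i j) ∨ StrictAntiOn t (Set.Icc i j)) ∧
  ∀ i' j' : Fin m, i' ≤ i → j ≤ j' → (i ≠ i' ∨ j ≠ j') →
    ¬ (StrictMonoOn t (Set.Icc i' j') ∨ StrictAntiOn t (Set.Icc i' j'))

/-- A *rollercoaster* is a finite sequence of distinct real numbers with at
least three terms in which every run has length (`j - i + 1`) at least 3. -/
def IsRollercoaster {m : ℕ} (t : Fin m → ℝ) : Prop :=
  3 ≤ m ∧ Function.Injective t ∧
  ∀ i j : Fin m, IsRun t i j → (i : ℕ) + 2 ≤ (j : ℕ)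

/-!
Take the sequence `1, 0, 3, 2, 5, 4, …`, which swaps the terms in each pair of consecutive
positions `2k, 2k + 1`. Its only descents are inside these pairs, so it has no decreasing
subsequence of length three. In a rollercoaster every descent lies in a decreasing run of
length at least three, so every rollercoaster subsequence is increasing, and an increasing
subsequence takes at most one term from each of the `⌈n/2⌉` pairs.
-/

section Runs

variable {m : ℕ} {t : Fin m → ℝ}

lemma exists_isRun_strictAntiOn_of_lt {a b : Fin m} (hab : a < b)
    (ht : StrictAntiOn t (Set.Icc a b)) :
    ∃ i j, i ≤ a ∧ b ≤ j ∧ IsRun t i j ∧ StrictAntiOn t (Set.Icc i j) := by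
  obtain ⟨i, ⟨hia, hi⟩, hi_min⟩ := Set.exists_min_image
    {x | x ≤ a ∧ StrictAntiOn t (Set.Icc x b)} id (Set.toFinite _) ⟨a, le_rfl, ht⟩
  obtain ⟨j, ⟨hbj, hj⟩, hj_max⟩ := Set.exists_max_image
    {y | b ≤ y ∧ StrictAntiOn t (Set.Icc i y)} id (Set.toFinite _) ⟨b, le_rfl, hi⟩
  have ha : a ∈ Set.Icc i j := ⟨hia, hab.le.trans hbj⟩
  have hb : b ∈ Set.Icc i j := ⟨hia.trans hab.le, hbj⟩
  refine ⟨i, j, hia, hbj, ⟨ha.2.trans' hia, Or.inr hj, ?_⟩, hj⟩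
  rintro i' j' hi' hj' hne (hmono | hanti)
  · have hsub : Set.Icc i j ⊆ Set.Icc i' j' := Set.Icc_subset_Icc hi' hj'
    exact (hmono (hsub ha) (hsub hb) hab).not_gt (hj ha hb hab)
  · rcases hne with hne | hne
    · exact hne (le_antisymm (hi_min i'
        ⟨hi'.trans hia, hanti.mono (Set.Icc_subset_Icc le_rfl (hbj.trans hj'))⟩) hi')
    · exact hne (le_antisymm hj' (hj_max j'
        ⟨hbj.trans hj', hanti.mono (Set.Icc_subset_Icc hi' le_rfl)⟩))

lemma IsRollercoaster.strictMono (ht : IsRollercoaster t)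
    (h : ∀ a b c : Fin m, a < b → b < c → ¬ (t c < t b ∧ t b < t a)) : StrictMono t := by
  obtain ⟨hm, hinj, hruns⟩ := ht
  obtain ⟨m, rfl⟩ : ∃ k, m = k + 1 := ⟨m - 1, by omega⟩
  refine Fin.strictMono_iff_lt_succ.2 fun k => ?_
  by_contra hk
  have hk_lt : k.castSucc < k.succ := Fin.castSucc_lt_succ
  have hdesc : t k.succ < t k.castSucc := (not_lt.1 hk).lt_of_ne (hinj.ne hk_lt.ne')
  have hpair : StrictAntiOn t (Set.Icc k.castSucc k.succ) := by
    rintro x ⟨hx₁, hx₂⟩ y ⟨hy₁, hy₂⟩ hxy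
    obtain rfl : x = k.castSucc := le_antisymm (Fin.le_castSucc_iff.2 (hxy.trans_le hy₂)) hx₁
    obtain rfl : y = k.succ :=
      le_antisymm hy₂ (Fin.castSucc_lt_iff_succ_le.1 (hx₁.trans_lt hxy))
    exact hdesc
  obtain ⟨i, j, -, -, hrun, hanti⟩ := exists_isRun_strictAntiOn_of_lt hk_lt hpair
  have hlen := hruns i j hrun
  let i₁ : Fin (m + 1) := ⟨i + 1, by omega⟩
  have hi₁ : i < i₁ := Fin.lt_def.2 (Nat.lt_succ_self _)
  have hi₁j : i₁ < j := Fin.lt_def.2 (by simp only [i₁]; omega)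
  have hij : i ≤ j := hi₁.le.trans hi₁j.le
  exact h i i₁ j hi₁ hi₁j ⟨hanti ⟨hi₁.le, hi₁j.le⟩ ⟨hij, le_rfl⟩ hi₁j,
    hanti ⟨le_rfl, hij⟩ ⟨hi₁.le, hi₁j.le⟩ hi₁⟩

end Runs

lemma le_of_strictMono_comp_of_coloring {α β : Type*} [LinearOrder α] [Preorder β] {k m : ℕ}
    {s : α → β}
    (c : α → Fin k) (hc : ∀ x y, x < y → c x = c y → ¬ s x < s y)
    {f : Fin m → α} (hf : StrictMono f) (hsf : StrictMono (s ∘ f)) : m ≤ k := by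
  simpa using Fintype.card_le_of_injective (c ∘ f) <|
    Function.Injective.of_lt_imp_ne fun a b hab hcab => hc _ _ (hf hab) hcab (hsf hab)

def pairSwap (i : ℕ) : ℕ := if i % 2 = 0 then i + 1 else i - 1

lemma pairSwap_injective : Function.Injective pairSwap := by
  intro i j h
  unfold pairSwap at h
  split_ifs at h <;> omega

lemma pairSwap_lt_pairSwap_iff {i j : ℕ} (hij : i < j) :
    pairSwap j < pairSwap i ↔ i / 2 = j / 2 := by
  unfold pairSwap
  split_ifs <;> omega

theorem statement1_general (n : ℕ) :
    ∃ s : Fin n → ℝ, Function.Injective s ∧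
      ∀ (m : ℕ) (f : Fin m → Fin n), StrictMono f →
        IsRollercoaster (s ∘ f) → m ≤ (n + 1) / 2 := by
  set s : Fin n → ℝ := fun i => (pairSwap i : ℝ)
  have hs {i j : Fin n} (hij : i < j) : s j < s i ↔ (i : ℕ) / 2 = j / 2 := by
    simp only [s, Nat.cast_lt]
    exact pairSwap_lt_pairSwap_iff hij
  refine ⟨s, Nat.cast_injective.comp (pairSwap_injective.comp Fin.val_injective),
    fun m f hf hroll => ?_⟩
  have hinc : StrictMono (s ∘ f) := hroll.strictMono fun a b c hab hbc ⟨hcb, hba⟩ => by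
    have := (hs (hf hab)).1 hba
    have := (hs (hf hbc)).1 hcb
    have := Fin.lt_def.1 (hf hab)
    have := Fin.lt_def.1 (hf hbc)
    omega
  refine le_of_strictMono_comp_of_coloring
    (fun i : Fin n => (⟨i / 2, by omega⟩ : Fin ((n + 1) / 2)))
    (fun i j hij hc hsij => ?_) hf hinc
  exact hsij.not_gt ((hs hij).2 (Fin.mk.inj hc))

/-- For every `n ≥ 8` there is a sequence of `n` distinct real numbers in
which every rollercoaster subsequence has length at most `⌈n/2⌉`. -/
theorem statement1 (n : ℕ) (hn : 8 ≤ n) :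
    ∃ s : Fin n → ℝ, Function.Injective s ∧
      ∀ (m : ℕ) (f : Fin m → Fin n), StrictMono f →
        IsRollercoaster (s ∘ f) → m ≤ (n + 1) / 2 :=
  statement1_general n
end

section
/- For every N there exists an n ≥ N and a sequence of n distinct real numbers such that every subsequence that is a rollercoaster and contains the first element or the last element of the sequence has length at most n/4 + 2; that is, there are arbitrarily long sequences in which any rollercoaster of length at least n/4 + 3 contains neither the first nor the last element. -/
private def w (k a : ℕ) : ℤ :=
  if a = 0 then 2 * k - 1
  else if a = 4 * k - 1 then 0
  else if a ≤ k then a - 2 * k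
  else if a ≤ 3 * k - 2 then a - k
  else a - k + 1

private lemma w_inj {k : ℕ} (hk : 1 ≤ k) {a b : ℕ} (ha : a ≤ 4 * k - 1)
    (hb : b ≤ 4 * k - 1) (h : w k a = w k b) : a = b := by
  unfold w at h; split_ifs at h <;> omega

private lemma w_mono {k : ℕ} (hk : 1 ≤ k) {a b : ℕ} (h1 : 1 ≤ a) (hab : a < b)
    (hb : b ≤ 4 * k - 2) : w k a < w k b := by
  unfold w; split_ifs <;> omega

private lemma w_top {k : ℕ} (hk : 1 ≤ k) {a : ℕ} (ha : a ≤ 4 * k - 1)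
    (h : w k 0 < w k a) : 3 * k - 1 ≤ a := by
  unfold w at h; split_ifs at h <;> omega

private lemma w_neg {k : ℕ} (hk : 1 ≤ k) {a : ℕ} (ha : a ≤ 4 * k - 1)
    (h : w k a < w k (4 * k - 1)) : a ≤ k := by
  unfold w at h; split_ifs at h <;> omega

private lemma sm_val {m n : ℕ} {f : Fin m → Fin n} (hf : StrictMono f) :
    ∀ (d : ℕ) (i j : Fin m), i.1 + d = j.1 → (f i).1 + d ≤ (f j).1 := by
  intro d
  induction d with
  | zero =>
    intro i j hij
    have h : i = j := Fin.ext (by omega)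
    subst h; omega
  | succ d ih =>
    intro i j hij
    have hlt : i.1 + d < m := by have := j.isLt; omega
    have h1 := ih i ⟨i.1 + d, hlt⟩ rfl
    have h2 : (f ⟨i.1 + d, hlt⟩).1 < (f j).1 :=
      hf (show i.1 + d < j.1 by omega)
    omega

private lemma sm_le {m n : ℕ} {f : Fin m → Fin n} (hf : StrictMono f) {a b : ℕ}
    (ha : a < m) (hb : b < m) (hab : a ≤ b) :
    (f ⟨a, ha⟩).1 + (b - a) ≤ (f ⟨b, hb⟩).1 :=
  sm_val hf (b - a) ⟨a, ha⟩ ⟨b, hb⟩ (show a + (b - a) = b by omega)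

private lemma sm_lt {m n : ℕ} {f : Fin m → Fin n} (hf : StrictMono f) {a b : ℕ}
    (ha : a < m) (hb : b < m) (hab : a < b) :
    (f ⟨a, ha⟩).1 < (f ⟨b, hb⟩).1 :=
  hf (show a < b from hab)

private lemma rc_first {m : ℕ} (t : Fin m → ℝ) (h : IsRollercoaster t) (hm : 3 ≤ m) :
    t ⟨0, by omega⟩ < t ⟨1, by omega⟩ ∨
      (t ⟨1, by omega⟩ < t ⟨0, by omega⟩ ∧ t ⟨2, by omega⟩ < t ⟨1, by omega⟩) := by
  have p0 : 0 < m := by omega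
  have p1 : 1 < m := by omega
  have p2 : 2 < m := by omega
  obtain ⟨-, hinj, hrun⟩ := h
  have hne01 : t ⟨0, p0⟩ ≠ t ⟨1, p1⟩ := fun hc =>
    absurd (hinj hc) (by simp [Fin.ext_iff])
  rcases hne01.lt_or_gt with hlt | hgt
  · exact Or.inl hlt
  · refine Or.inr ⟨hgt, ?_⟩
    by_contra hc
    have hne12 : t ⟨1, p1⟩ ≠ t ⟨2, p2⟩ := fun hc2 =>
      absurd (hinj hc2) (by simp [Fin.ext_iff])
    have h12 : t ⟨1, p1⟩ < t ⟨2, p2⟩ := by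
      rcases hne12.lt_or_gt with h' | h'
      · exact h'
      · exact absurd h' hc
    have hisrun : IsRun t ⟨0, p0⟩ ⟨1, p1⟩ := by
      refine ⟨show (0:ℕ) ≤ 1 by omega, Or.inr ?_, ?_⟩
      · intro x hx y hy hxy
        have hx1 : x.1 ≤ 1 := hx.2
        have hy1 : y.1 ≤ 1 := hy.2
        have hxy' : x.1 < y.1 := hxy
        have hx0 : x = ⟨0, p0⟩ := Fin.ext (show x.1 = 0 by omega)
        have hy0 : y = ⟨1, p1⟩ := Fin.ext (show y.1 = 1 by omega)
        rw [hx0, hy0]; exact hgt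
      · rintro i' j' hi' hj' hne (hmono | hanti)
        · have hi0 : i'.1 = 0 := by have h' : i'.1 ≤ 0 := hi'; omega
          have hj1 : (1:ℕ) ≤ j'.1 := hj'
          have h01 := hmono (a := ⟨0, p0⟩) (b := ⟨1, p1⟩)
            (Set.mem_Icc.mpr ⟨show i'.1 ≤ 0 by omega, show (0:ℕ) ≤ j'.1 by omega⟩)
            (Set.mem_Icc.mpr ⟨show i'.1 ≤ 1 by omega, show (1:ℕ) ≤ j'.1 by omega⟩)
            (show (0:ℕ) < 1 by omega)
          exact absurd h01 (not_lt.mpr hgt.le)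
        · have hi0 : i'.1 = 0 := by have h' : i'.1 ≤ 0 := hi'; omega
          have hj2 : (2:ℕ) ≤ j'.1 := by
            rcases hne with hA | hB
            · exact absurd (Fin.ext (show (0:ℕ) = i'.1 by omega)) hA
            · have h1 : (1:ℕ) ≤ j'.1 := hj'
              have h2 : j'.1 ≠ 1 := fun hc' => hB (Fin.ext (show (1:ℕ) = j'.1 by omega))
              omega
          have h12' := hanti (a := ⟨1, p1⟩) (b := ⟨2, p2⟩)
            (Set.mem_Icc.mpr ⟨show i'.1 ≤ 1 by omega, show (1:ℕ) ≤ j'.1 by omega⟩)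
            (Set.mem_Icc.mpr ⟨show i'.1 ≤ 2 by omega, show (2:ℕ) ≤ j'.1 by omega⟩)
            (show (1:ℕ) < 2 by omega)
          exact absurd h12' hc
    have hfin : (0:ℕ) + 2 ≤ 1 := hrun _ _ hisrun
    omega

private lemma rc_last {m : ℕ} (t : Fin m → ℝ) (h : IsRollercoaster t) (hm : 3 ≤ m) :
    t ⟨m - 2, by omega⟩ < t ⟨m - 1, by omega⟩ ∨
      (t ⟨m - 1, by omega⟩ < t ⟨m - 2, by omega⟩ ∧
        t ⟨m - 2, by omega⟩ < t ⟨m - 3, by omega⟩) := by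
  have q1 : m - 1 < m := by omega
  have q2 : m - 2 < m := by omega
  have q3 : m - 3 < m := by omega
  obtain ⟨-, hinj, hrun⟩ := h
  have hne : t ⟨m - 2, q2⟩ ≠ t ⟨m - 1, q1⟩ := fun hc =>
    absurd (hinj hc) (by simp [Fin.ext_iff]; omega)
  rcases hne.lt_or_gt with hlt | hgt
  · exact Or.inl hlt
  · refine Or.inr ⟨hgt, ?_⟩
    by_contra hc
    have hne23 : t ⟨m - 2, q2⟩ ≠ t ⟨m - 3, q3⟩ := fun hc2 =>
      absurd (hinj hc2) (by simp [Fin.ext_iff]; omega)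
    have h23 : t ⟨m - 3, q3⟩ < t ⟨m - 2, q2⟩ := by
      rcases hne23.lt_or_gt with h' | h'
      · exact absurd h' hc
      · exact h'
    have hisrun : IsRun t ⟨m - 2, q2⟩ ⟨m - 1, q1⟩ := by
      refine ⟨show m - 2 ≤ m - 1 by omega, Or.inr ?_, ?_⟩
      · intro x hx y hy hxy
        have hx1 : m - 2 ≤ x.1 := hx.1
        have hx2 : x.1 ≤ m - 1 := hx.2
        have hy1 : m - 2 ≤ y.1 := hy.1
        have hy2 : y.1 ≤ m - 1 := hy.2
        have hxy' : x.1 < y.1 := hxy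
        have hx0 : x = ⟨m - 2, q2⟩ := Fin.ext (show x.1 = m - 2 by omega)
        have hy0 : y = ⟨m - 1, q1⟩ := Fin.ext (show y.1 = m - 1 by omega)
        rw [hx0, hy0]; exact hgt
      · rintro i' j' hi' hj' hne' (hmono | hanti)
        · have hj0 : j'.1 = m - 1 := by
            have h1 : m - 1 ≤ j'.1 := hj'
            have := j'.isLt; omega
          have hi1 : i'.1 ≤ m - 2 := hi'
          have h01 := hmono (a := ⟨m - 2, q2⟩) (b := ⟨m - 1, q1⟩)
            (Set.mem_Icc.mpr ⟨show i'.1 ≤ m - 2 by omega, show m - 2 ≤ j'.1 by omega⟩)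
            (Set.mem_Icc.mpr ⟨show i'.1 ≤ m - 1 by omega, show m - 1 ≤ j'.1 by omega⟩)
            (show m - 2 < m - 1 by omega)
          exact absurd h01 (not_lt.mpr hgt.le)
        · have hj0 : j'.1 = m - 1 := by
            have h1 : m - 1 ≤ j'.1 := hj'
            have := j'.isLt; omega
          have hi1 : i'.1 ≤ m - 3 := by
            have h1 : i'.1 ≤ m - 2 := hi'
            rcases hne' with hA | hB
            · have h2 : i'.1 ≠ m - 2 := fun hc' => hA (Fin.ext (show m - 2 = i'.1 from hc'.symm))
              omega
            · exact absurd (Fin.ext (show m - 1 = j'.1 from hj0.symm)) hB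
          have h23' := hanti (a := ⟨m - 3, q3⟩) (b := ⟨m - 2, q2⟩)
            (Set.mem_Icc.mpr ⟨show i'.1 ≤ m - 3 by omega, show m - 3 ≤ j'.1 by omega⟩)
            (Set.mem_Icc.mpr ⟨show i'.1 ≤ m - 2 by omega, show m - 2 ≤ j'.1 by omega⟩)
            (show m - 3 < m - 2 by omega)
          exact absurd h23' hc
    have hfin : (m - 2) + 2 ≤ m - 1 := hrun _ _ hisrun
    omega

/-- There are arbitrarily long sequences of distinct real numbers in which
every rollercoaster subsequence containing the first or the last element has
length at most `n/4 + 2`. -/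
theorem statement9 (N : ℕ) :
    ∃ n : ℕ, N ≤ n + 1 ∧ ∃ s : Fin (n + 1) → ℝ, Function.Injective s ∧
      ∀ (m : ℕ) (f : Fin m → Fin (n + 1)), StrictMono f → IsRollercoaster (s ∘ f) →
        ((0 : Fin (n + 1)) ∈ Set.range f ∨ Fin.last n ∈ Set.range f) →
        (m : ℝ) ≤ ((n : ℝ) + 1) / 4 + 2 := by
  set k := N + 1 with hkdef
  have hk : 1 ≤ k := by omega
  refine ⟨4 * k - 1, by omega, fun i => ((w k i.1 : ℤ) : ℝ), ?_, ?_⟩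
  · intro a b hab
    have h : w k a.1 = w k b.1 := by
      exact_mod_cast show ((w k a.1 : ℤ) : ℝ) = ((w k b.1 : ℤ) : ℝ) from hab
    exact Fin.ext (w_inj hk (by have := a.isLt; omega) (by have := b.isLt; omega) h)
  · intro m f hf hrc hmem
    have hm3 : 3 ≤ m := hrc.1
    have h0m : 0 < m := by omega
    have h1m : 1 < m := by omega
    have h2m : 2 < m := by omega
    have hm1 : m - 1 < m := by omega
    have hm2 : m - 2 < m := by omega
    have hm3' : m - 3 < m := by omega
    have hub : ∀ i : Fin m, (f i).1 ≤ 4 * k - 1 := fun i => by have := (f i).isLt; omega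
    have hbound : m ≤ k + 2 := by
      rcases hmem with ⟨j, hj⟩ | ⟨j, hj⟩
      · -- contains the first element
        have hf0 : (f ⟨0, h0m⟩).1 = 0 := by
          have h1 : f ⟨0, h0m⟩ ≤ f j := hf.monotone (show (0:ℕ) ≤ j.1 from Nat.zero_le _)
          rw [hj] at h1
          have h2 : (f ⟨0, h0m⟩).1 ≤ (0 : Fin (4 * k - 1 + 1)).1 := h1
          simpa using h2
        rcases rc_first _ hrc hm3 with h1 | ⟨h1, h2⟩
        · simp only [Function.comp_apply] at h1
          have h1' : w k (f ⟨0, h0m⟩).1 < w k (f ⟨1, h1m⟩).1 := by exact_mod_cast h1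
          rw [hf0] at h1'
          have h31 : 3 * k - 1 ≤ (f ⟨1, h1m⟩).1 := w_top hk (hub _) h1'
          have hsm := sm_le hf h1m hm1 (show 1 ≤ m - 1 by omega)
          have hu := hub ⟨m - 1, hm1⟩
          omega
        · simp only [Function.comp_apply] at h2
          have h2' : w k (f ⟨2, h2m⟩).1 < w k (f ⟨1, h1m⟩).1 := by exact_mod_cast h2
          have h01 : (f ⟨0, h0m⟩).1 < (f ⟨1, h1m⟩).1 := sm_lt hf h0m h1m (by omega)
          have h12 : (f ⟨1, h1m⟩).1 < (f ⟨2, h2m⟩).1 := sm_lt hf h1m h2m (by omega)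
          have hb : (f ⟨2, h2m⟩).1 = 4 * k - 1 := by
            by_contra hcc
            have hb' : (f ⟨2, h2m⟩).1 ≤ 4 * k - 2 := by have := hub ⟨2, h2m⟩; omega
            have := w_mono hk (show 1 ≤ (f ⟨1, h1m⟩).1 by omega) h12 hb'
            omega
          have hm4 : m ≤ 3 := by
            by_contra hm4
            have hx := sm_lt hf h2m hm1 (show 2 < m - 1 by omega)
            have := hub ⟨m - 1, hm1⟩
            omega
          omega
      · -- contains the last element
        have hflast : (f ⟨m - 1, hm1⟩).1 = 4 * k - 1 := by
          have h1 : f j ≤ f ⟨m - 1, hm1⟩ :=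
            hf.monotone (show j.1 ≤ m - 1 by have := j.isLt; omega)
          rw [hj] at h1
          have h2 : 4 * k - 1 ≤ (f ⟨m - 1, hm1⟩).1 := h1
          have := hub ⟨m - 1, hm1⟩
          omega
        rcases rc_last _ hrc hm3 with h1 | ⟨h1, h2⟩
        · simp only [Function.comp_apply] at h1
          have h1' : w k (f ⟨m - 2, hm2⟩).1 < w k (f ⟨m - 1, hm1⟩).1 := by exact_mod_cast h1
          rw [hflast] at h1'
          have hle : (f ⟨m - 2, hm2⟩).1 ≤ k := w_neg hk (hub _) h1'
          have hsm := sm_le hf h0m hm2 (show 0 ≤ m - 2 by omega)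
          omega
        · simp only [Function.comp_apply] at h2
          have h2' : w k (f ⟨m - 2, hm2⟩).1 < w k (f ⟨m - 3, hm3'⟩).1 := by exact_mod_cast h2
          have hab : (f ⟨m - 3, hm3'⟩).1 < (f ⟨m - 2, hm2⟩).1 :=
            sm_lt hf hm3' hm2 (show m - 3 < m - 2 by omega)
          have hb2 : (f ⟨m - 2, hm2⟩).1 ≤ 4 * k - 2 := by
            have := sm_lt hf hm2 hm1 (show m - 2 < m - 1 by omega)
            omega
          have ha0 : (f ⟨m - 3, hm3'⟩).1 = 0 := by
            by_contra hcc
            have := w_mono hk (show 1 ≤ (f ⟨m - 3, hm3'⟩).1 by omega) hab hb2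
            omega
          have hm4 : m ≤ 3 := by
            by_contra hm4
            have hx := sm_lt hf h0m hm3' (show 0 < m - 3 by omega)
            omega
          omega
    have hcast : ((4 * k - 1 : ℕ) : ℝ) + 1 = 4 * (k : ℝ) := by
      have h1 : (1 : ℕ) ≤ 4 * k := by omega
      rw [Nat.cast_sub h1]; push_cast; ring
    rw [hcast]
    have hm' : (m : ℝ) ≤ (k : ℝ) + 2 := by exact_mod_cast hbound
    linarith
end
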